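/- Let M be a real centrosymmetric matrix of even size 2m, written in block form M = [[A, B], [C, D]] with m × m blocks. Then the characteristic polynomial of M factors as the product of the characteristic polynomials of A + J_m C and A − J_m C: charpoly(M) = charpoly(A + J_m C) · charpoly(A − J_m C). -/
import Mathlib


open Matrix

noncomputable section

/-- The `m × m` counter-identity (exchange) matrix `J_m`, with ones on the anti-diagonal and
zeros elsewhere. -/
def Jmat (m : ℕ) : Matrix (Fin m) (Fin m) ℝ :=
  Matrix.of fun i j => if j = i.rev then 1 else 0

lemma Jmat_mul {m : ℕ} (X : Matrix (Fin m) (Fin m) ℝ) (i j : Fin m) :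
    (Jmat m * X) i j = X i.rev j := by
  simp [Jmat, Matrix.mul_apply]

lemma mul_Jmat {m : ℕ} (X : Matrix (Fin m) (Fin m) ℝ) (i j : Fin m) :
    (X * Jmat m) i j = X i j.rev := by
  simp only [Jmat, Matrix.mul_apply, Matrix.of_apply]
  rw [Finset.sum_eq_single j.rev]
  · simp
  · intro b _ hb
    rw [if_neg, mul_zero]
    intro h
    exact hb (by rw [← Fin.rev_rev b, h, Fin.rev_rev])
  · simp

lemma Jmat_mul_Jmat (m : ℕ) : Jmat m * Jmat m = 1 := by
  ext i j
  rw [Jmat_mul]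
  simp [Jmat, Matrix.one_apply, eq_comm, Fin.rev_eq_iff]

lemma charpoly_conj_aux {n : Type*} [DecidableEq n] [Fintype n]
    (N P Q : Matrix n n ℝ) (hQP : Q * P = 1) (hPQ : P * Q = 1) :
    (Q * N * P).charpoly = N.charpoly := by
  have hmap : ∀ (X Y : Matrix n n ℝ),
      (X * Y).map (Polynomial.C : ℝ →+* Polynomial ℝ) = X.map _ * Y.map _ :=
    fun X Y => Matrix.map_mul
  have hcomm := Matrix.scalar_commute (n := n) (Polynomial.X : Polynomial ℝ)
    (fun r' => Commute.all _ _) (Q.map Polynomial.C)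
  have key : charmatrix (Q * N * P) =
      Q.map (Polynomial.C : ℝ →+* Polynomial ℝ) * charmatrix N * P.map Polynomial.C := by
    rw [charmatrix, charmatrix, mul_sub, sub_mul, RingHom.mapMatrix_apply,
      RingHom.mapMatrix_apply, hmap, hmap, ← hcomm.eq, mul_assoc _ _ (P.map Polynomial.C)]
    have : (Q.map (Polynomial.C : ℝ →+* Polynomial ℝ)) * (P.map Polynomial.C) = 1 := by
      rw [← hmap, hQP]
      simp
    rw [mul_assoc, this, mul_one]
  have hdet1 : (Q.map (Polynomial.C : ℝ →+* Polynomial ℝ)).det * (P.map Polynomial.C).det = 1 := by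
    rw [← Matrix.det_mul, ← hmap, hQP]
    simp
  rw [Matrix.charpoly, Matrix.charpoly, key, Matrix.det_mul, Matrix.det_mul]
  ring_nf
  rw [mul_comm, ← mul_assoc, mul_comm ((P.map _).det), hdet1, one_mul]

/-- Let `M` be a real centrosymmetric matrix of even size `2m`, written in block form
`M = [[A, B], [C, D]]` with `m × m` blocks.  Then the characteristic polynomial of `M` factors
as `charpoly(M) = charpoly(A + J_m C) · charpoly(A − J_m C)`. -/
theorem centrosymmetric_charpoly_factorization (m : ℕ)
    (M : Matrix (Fin (m + m)) (Fin (m + m)) ℝ)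
    (hM : ∀ i j, M i j = M i.rev j.rev)
    (A C : Matrix (Fin m) (Fin m) ℝ)
    (hA : ∀ i j, A i j = M (Fin.castAdd m i) (Fin.castAdd m j))
    (hC : ∀ i j, C i j = M (Fin.natAdd m i) (Fin.castAdd m j)) :
    M.charpoly = (A + Jmat m * C).charpoly * (A - Jmat m * C).charpoly := by
  set J := Jmat m with hJ
  have hJJ : J * J = 1 := Jmat_mul_Jmat m
  have hrevc : ∀ i : Fin m, (Fin.castAdd m i).rev = Fin.natAdd m i.rev := by
    intro i; ext; simp [Fin.rev]; omega
  have hrevn : ∀ i : Fin m, (Fin.natAdd m i).rev = Fin.castAdd m i.rev := by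
    intro i; ext; simp [Fin.rev]; omega
  have hJXJ : ∀ (X : Matrix (Fin m) (Fin m) ℝ) (i j : Fin m),
      (J * X * J) i j = X i.rev j.rev := by
    intro X i j; rw [mul_Jmat, Jmat_mul]
  set N := Matrix.reindex (finSumFinEquiv (m := m) (n := m)).symm
      (finSumFinEquiv (m := m) (n := m)).symm M with hN
  have hNblocks : N = fromBlocks A (J * C * J) C (J * A * J) := by
    ext i j
    rcases i with i | i <;> rcases j with j | j <;>
      simp only [hN, Matrix.reindex_apply, Matrix.submatrix_apply, Equiv.symm_symm,
        finSumFinEquiv_apply_left, finSumFinEquiv_apply_right,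
        Matrix.fromBlocks_apply₁₁, Matrix.fromBlocks_apply₁₂,
        Matrix.fromBlocks_apply₂₁, Matrix.fromBlocks_apply₂₂]
    · exact (hA i j).symm
    · rw [hJXJ, hC, hM (Fin.castAdd m i) (Fin.natAdd m j), hrevc, hrevn]
    · exact (hC i j).symm
    · rw [hJXJ, hA, hM (Fin.natAdd m i) (Fin.natAdd m j), hrevn, hrevn]
  set S := A + J * C with hS
  set T := A - J * C with hT
  set P : Matrix (Fin m ⊕ Fin m) (Fin m ⊕ Fin m) ℝ := fromBlocks 1 1 J (-J) with hP
  set Q : Matrix (Fin m ⊕ Fin m) (Fin m ⊕ Fin m) ℝ :=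
    (2⁻¹ : ℝ) • fromBlocks 1 J 1 (-J) with hQ
  have hQP : Q * P = 1 := by
    rw [hQ, hP, Matrix.smul_mul, Matrix.fromBlocks_multiply]
    ext (i | i) (j | j) <;>
      simp [hJJ, Matrix.one_apply, Matrix.smul_apply] <;> split <;> norm_num
  have hPQ : P * Q = 1 := by
    rw [hQ, hP, Matrix.mul_smul, Matrix.fromBlocks_multiply]
    ext (i | i) (j | j) <;>
      simp [hJJ, Matrix.one_apply, Matrix.smul_apply] <;> split <;> norm_num
  have hJJC : J * (J * C) = C := by rw [← mul_assoc, hJJ, one_mul]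
  have hNP : N * P = P * fromBlocks S 0 0 T := by
    rw [hNblocks, hP, Matrix.fromBlocks_multiply, Matrix.fromBlocks_multiply]
    congr 1 <;>
      simp [hS, hT, mul_add, mul_sub, mul_assoc, hJJ, hJJC, mul_neg, neg_mul, add_comm, sub_eq_add_neg]
  have hconj : Q * N * P = fromBlocks S 0 0 T := by
    rw [mul_assoc, hNP, ← mul_assoc, hQP, one_mul]
  calc M.charpoly = N.charpoly :=
        (Matrix.charpoly_reindex (finSumFinEquiv (m := m) (n := m)).symm M).symm
    _ = (Q * N * P).charpoly := (charpoly_conj_aux N P Q hQP hPQ).symm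
    _ = (fromBlocks S 0 0 T).charpoly := by rw [hconj]
    _ = S.charpoly * T.charpoly := by rw [Matrix.charpoly_fromBlocks_zero₂₁]
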